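/- Let G be a finitely generated virtually free abelian group with canonical map ι: G → Ĝ to its profinite completion. Then every finite subgroup H of Ĝ is conjugate in Ĝ to a subgroup of ι(G), i.e. there exists b ∈ Ĝ with bHb⁻¹ ⊆ ι(G). -/

import Mathlib

/-- Two groups have the same set of isomorphism classes of finite quotients. -/
def SameFiniteQuotients (G H : Type*) [Group G] [Group H] : Prop :=
  ∀ (Q : Type) [Group Q] [Finite Q],
    (∃ f : G →* Q, Function.Surjective f) ↔ (∃ f : H →* Q, Function.Surjective f)

/-- A group is residually finite if every nontrivial element survives in some finite
quotient. -/
def ResiduallyFinite (G : Type*) [Group G] : Prop :=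
  ∀ g : G, g ≠ 1 → ∃ N : Subgroup G, N.Normal ∧ N.FiniteIndex ∧ g ∉ N

/-- A group has no nontrivial finite normal subgroup. -/
def NoFiniteNormalSubgroup (G : Type*) [Group G] : Prop :=
  ∀ N : Subgroup G, N.Normal → Finite N → N = ⊥

/-- `G` is virtually free abelian of rank `n`, witnessed by a normal finite-index
subgroup isomorphic to `ℤⁿ`. -/
def HasNormalZnFiniteIndex (n : ℕ) (G : Type*) [Group G] : Prop :=
  ∃ N : Subgroup G, N.Normal ∧ N.FiniteIndex ∧
    Nonempty (N ≃* Multiplicative (Fin n → ℤ))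

/-- `G` is an `n`-dimensional crystallographic group (algebraic characterisation:
virtually `ℤⁿ` with no nontrivial finite normal subgroup). -/
def IsCrystallographic (n : ℕ) (G : Type*) [Group G] : Prop :=
  HasNormalZnFiniteIndex n G ∧ NoFiniteNormalSubgroup G

/-- `G` is an `n`-dimensional crystallographic group with point group (isomorphic to) `P`. -/
def IsCrystallographicWithPointGroup (n : ℕ) (G : Type*) [Group G]
    (P : Type*) [Group P] : Prop :=
  NoFiniteNormalSubgroup G ∧ Finite P ∧
    ∃ (N : Subgroup G) (_ : N.Normal), N.FiniteIndex ∧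
      Nonempty (N ≃* Multiplicative (Fin n → ℤ)) ∧ Nonempty ((G ⧸ N) ≃* P)

/-- `G` is a symmorphic `n`-dimensional crystallographic group: the short exact sequence
`1 → ℤⁿ → G → P → 1` splits. -/
def IsSymmorphic (n : ℕ) (G : Type*) [Group G] : Prop :=
  ∃ (N : Subgroup G) (_ : N.Normal), N.FiniteIndex ∧
    Nonempty (N ≃* Multiplicative (Fin n → ℤ)) ∧
    ∃ s : (G ⧸ N) →* G, (QuotientGroup.mk' N).comp s = MonoidHom.id (G ⧸ N)

/-- A group is just infinite if it is infinite but all of its proper quotients are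
finite, i.e. every nontrivial normal subgroup has finite index. -/
def JustInfinite (G : Type*) [Group G] : Prop :=
  Infinite G ∧ ∀ N : Subgroup G, N.Normal → N ≠ ⊥ → N.FiniteIndex

/-- `G` is virtually free abelian: some finite-index subgroup is isomorphic to `ℤⁿ`
for some `n`. -/
def VirtuallyFreeAbelian (G : Type*) [Group G] : Prop :=
  ∃ (n : ℕ) (N : Subgroup G), N.FiniteIndex ∧ Nonempty (N ≃* Multiplicative (Fin n → ℤ))

/-- The set of finite-index normal subgroups of `G`. -/
abbrev NormalFiniteIndexSubgroup (G : Type*) [Group G] : Type _ :=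
  {N : Subgroup G // N.Normal ∧ N.FiniteIndex}

instance (G : Type*) [Group G] (N : NormalFiniteIndexSubgroup G) : N.val.Normal := N.prop.1
instance (G : Type*) [Group G] (N : NormalFiniteIndexSubgroup G) : N.val.FiniteIndex := N.prop.2
instance (G : Type*) [Group G] (N : NormalFiniteIndexSubgroup G) :
    TopologicalSpace (G ⧸ N.val) := ⊥
instance (G : Type*) [Group G] (N : NormalFiniteIndexSubgroup G) :
    DiscreteTopology (G ⧸ N.val) := ⟨rfl⟩
instance (G : Type*) [Group G] (N : NormalFiniteIndexSubgroup G) :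
    IsTopologicalGroup (G ⧸ N.val) := ⟨⟩

/-- The product of all finite quotients of `G`, with the product topology of the
discrete topologies. -/
abbrev ProfiniteAmbient (G : Type*) [Group G] : Type _ :=
  ∀ N : NormalFiniteIndexSubgroup G, G ⧸ N.val

/-- The canonical map `G → ∏ G/N`. -/
def profiniteMap (G : Type*) [Group G] : G →* ProfiniteAmbient G :=
  Pi.monoidHom fun N => QuotientGroup.mk' N.val

/-- The profinite completion of `G`, as the closure of the image of `G` in `∏ G/N`. -/
def profiniteCompletionSubgroup (G : Type*) [Group G] : Subgroup (ProfiniteAmbient G) :=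
  (profiniteMap G).range.topologicalClosure

/-- The profinite completion of `G`. -/
abbrev ProfiniteCompletion (G : Type*) [Group G] : Type _ :=
  ↥(profiniteCompletionSubgroup G)

/-- The canonical homomorphism `ι : G → Ĝ`. -/
def profiniteIota (G : Type*) [Group G] : G →* ProfiniteCompletion G :=
  (profiniteMap G).codRestrict _ fun g =>
    Subgroup.le_topologicalClosure _ ⟨g, rfl⟩

/-!
Fix a normal subgroup `C` of finite index in `G` that is free abelian of finite rank, and let `K` be
the kernel of `Ĝ → G/C`, the closure of `ι(C)`. Then `K` is abelian, `Ĝ = K · ι(G)`, and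
`V = K/(K ∩ ι(G))`, which is `Ĉ/C`, is uniquely divisible: `m`-th roots exist by compactness of `K`
and finiteness of `C/Cᵐ`, and are unique because `C` is torsion-free, as one sees in the finite
quotients `G/Cᵐᵗ`. For a finite `H ≤ Ĝ` of order `m`, the `K`-components of the elements of `H`
form a `1`-cocycle of `H` with values in `V`; averaging over `H` and taking an `m`-th root writes it
as the coboundary of some `σ ∈ K`, and `σ` conjugates `H` into `ι(G)`.
-/

open scoped IsMulCommutative

theorem exists_eq_coboundary_of_bijective_pow {H V : Type*} [Group H] [Finite H] [CommGroup V]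
    (ρ : H → V →* V) (hpow : Function.Bijective fun v : V => v ^ Nat.card H) (c : H → V)
    (hc : ∀ h x, c (h * x) = c h * ρ h (c x)) : ∃ t, ∀ h, c h = ρ h t * t⁻¹ := by
  have := Fintype.ofFinite H
  set P := ∏ x, c x
  obtain ⟨t, ht⟩ := hpow.2 P⁻¹
  refine ⟨t, fun h => hpow.1 ?_⟩
  have hP : P = c h ^ Nat.card H * ρ h P := calc
    P = ∏ x, c (h * x) := (Fintype.prod_equiv (Equiv.mulLeft h) _ _ fun _ => rfl).symm
    _ = ∏ x, c h * ρ h (c x) := Finset.prod_congr rfl fun x _ => hc h x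
    _ = c h ^ Nat.card H * ρ h P := by
      rw [Finset.prod_mul_distrib, Finset.prod_const, map_prod, Finset.card_univ,
        Nat.card_eq_fintype_card]
  simp only [mul_pow, inv_pow, ← map_pow, ht, map_inv, inv_inv]
  rw [eq_inv_mul_iff_mul_eq, mul_comm, ← hP]

namespace Subgroup

lemma conj_mem_of_mul_inv_mem {E : Type*} [Group E] {K A : Subgroup E} [K.Normal]
    [IsMulCommutative K] {h a κ : E} (ha : a ∈ A) (hha : h * a⁻¹ ∈ K) (hκK : κ ∈ K)
    (hκA : κ ∈ A) : h * κ * h⁻¹ ∈ A := by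
  have hcomm := setLike_mul_comm hha (Normal.conj_mem inferInstance κ hκK a)
  have : h * κ * h⁻¹ = a * κ * a⁻¹ := calc
    _ = (h * a⁻¹) * (a * κ * a⁻¹) * (h * a⁻¹)⁻¹ := by group
    _ = _ := by rw [hcomm]; group
  exact this ▸ A.mul_mem (A.mul_mem ha hκA) (A.inv_mem ha)

theorem exists_conj_map_le_of_bijective_pow {E : Type*} [Group E] (K A H : Subgroup E) [K.Normal]
    [IsMulCommutative K] [Finite H] (hHKA : ∀ h ∈ H, ∃ a ∈ A, h * a⁻¹ ∈ K)
    (hpow : Function.Bijective fun v : K ⧸ A.subgroupOf K => v ^ Nat.card H) :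
    ∃ σ ∈ K, H.map (MulAut.conj σ).toMonoidHom ≤ A := by
  choose u hu hd using fun h : H => hHKA h h.2
  let d : H → K := fun h => ⟨h * (u h)⁻¹, hd h⟩
  let ρ : H → (K ⧸ A.subgroupOf K) →* (K ⧸ A.subgroupOf K) := fun h =>
    QuotientGroup.map (A.subgroupOf K) (A.subgroupOf K)
      (MulAut.conjNormal (h : E) : MulAut K).toMonoidHom
      fun κ hκ => conj_mem_of_mul_inv_mem (hu h) (hd h) κ.2 hκ
  let c : H → K ⧸ A.subgroupOf K := fun h => d h
  have hc (h x : H) : c (h * x) = c h * ρ h (c x) := by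
    rw [mul_comm]
    change (d (h * x) : K ⧸ A.subgroupOf K) = (MulAut.conjNormal (h : E) (d x) * d h : K)
    have key : (((d (h * x))⁻¹ * (MulAut.conjNormal (h : E) (d x) * d h) : K) : E) =
        u (h * x) * (u x)⁻¹ * (u h)⁻¹ := by
      simp only [d, coe_mul, coe_inv, MulAut.conjNormal_apply]; group
    rw [QuotientGroup.eq, mem_subgroupOf, key]
    exact A.mul_mem (A.mul_mem (hu _) (A.inv_mem (hu x))) (A.inv_mem (hu h))
  obtain ⟨t, ht⟩ := exists_eq_coboundary_of_bijective_pow ρ hpow c hc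
  obtain ⟨σ, rfl⟩ := QuotientGroup.mk_surjective t
  refine ⟨σ, σ.2, ?_⟩
  rintro _ ⟨h, hh, rfl⟩
  have hmem : ((MulAut.conjNormal h σ * σ⁻¹)⁻¹ * d ⟨h, hh⟩ : K) ∈ A.subgroupOf K :=
    QuotientGroup.eq.mp (ht ⟨h, hh⟩).symm
  have key : (((MulAut.conjNormal h σ * σ⁻¹)⁻¹ * d ⟨h, hh⟩ : K) : E) =
      σ * h * σ⁻¹ * (u ⟨h, hh⟩)⁻¹ := by
    simp only [d, coe_mul, coe_inv, MulAut.conjNormal_apply]; group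
  rw [mem_subgroupOf, key] at hmem
  simpa using A.mul_mem hmem (hu ⟨h, hh⟩)

end Subgroup

section

variable {G : Type*} [Group G]

namespace Subgroup

def powSubgroup (C : Subgroup G) [IsMulCommutative C] (m : ℕ) : Subgroup G :=
  (powMonoidHom m : C →* C).range.map C.subtype

variable {C : Subgroup G} [IsMulCommutative C]

lemma mem_powSubgroup {m : ℕ} {g : G} : g ∈ C.powSubgroup m ↔ ∃ c ∈ C, c ^ m = g where
  mp := by rintro ⟨_, ⟨c, rfl⟩, rfl⟩; exact ⟨c, c.2, rfl⟩
  mpr := by rintro ⟨c, hc, rfl⟩; exact ⟨_, ⟨⟨c, hc⟩, rfl⟩, rfl⟩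

instance powSubgroup_normal [C.Normal] (m : ℕ) : (C.powSubgroup m).Normal where
  conj_mem g hg x := by
    obtain ⟨c, hc, rfl⟩ := mem_powSubgroup.mp hg
    exact mem_powSubgroup.mpr ⟨x * c * x⁻¹, ‹C.Normal›.conj_mem c hc x, conj_pow⟩

lemma powSubgroup_finiteIndex [C.FiniteIndex] [Group.FG C] {m : ℕ} (hm : m ≠ 0) :
    (C.powSubgroup m).FiniteIndex := by
  have := finiteIndex_range_powMonoidHom_of_fg C hm
  refine ⟨?_⟩
  rw [powSubgroup, index_map_subtype]
  exact mul_ne_zero FiniteIndex.index_ne_zero FiniteIndex.index_ne_zero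

end Subgroup

def NormalFiniteIndexSubgroup.of (C : Subgroup G) [C.Normal] [C.FiniteIndex] :
    NormalFiniteIndexSubgroup G :=
  ⟨C, ‹_›, ‹_›⟩

namespace ProfiniteCompletion

def eval (M : NormalFiniteIndexSubgroup G) : ProfiniteCompletion G →* G ⧸ M.val :=
  (Pi.evalMonoidHom _ M).comp (profiniteCompletionSubgroup G).subtype

@[simp]
lemma eval_profiniteIota (M : NormalFiniteIndexSubgroup G) (g : G) :
    eval M (profiniteIota G g) = g :=
  rfl

lemma continuous_eval (M : NormalFiniteIndexSubgroup G) : Continuous (eval M) :=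
  (continuous_apply M).comp continuous_subtype_val

@[ext]
lemma ext {x y : ProfiniteCompletion G} (h : ∀ M, eval M x = eval M y) : x = y :=
  Subtype.ext (funext h)

instance : CompactSpace (ProfiniteCompletion G) :=
  isCompact_iff_compactSpace.mp (Subgroup.isClosed_topologicalClosure _).isCompact

lemma denseRange_profiniteIota : DenseRange (profiniteIota G) := by
  rw [DenseRange, Subtype.dense_iff, ← Set.range_comp]
  exact subset_rfl

section Kernel

variable (C : Subgroup G) [C.Normal] [C.FiniteIndex]

abbrev kerEval : Subgroup (ProfiniteCompletion G) :=
  (eval (NormalFiniteIndexSubgroup.of C)).ker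

variable {C}

lemma profiniteIota_mem_kerEval {g : G} : profiniteIota G g ∈ kerEval C ↔ g ∈ C :=
  QuotientGroup.eq_one_iff g

lemma isOpen_kerEval : IsOpen (kerEval C : Set (ProfiniteCompletion G)) :=
  (isOpen_discrete {1}).preimage (continuous_eval _)

lemma isClosed_kerEval : IsClosed (kerEval C : Set (ProfiniteCompletion G)) :=
  (isClosed_discrete {1}).preimage (continuous_eval _)

lemma kerEval_subset_closure :
    (kerEval C : Set (ProfiniteCompletion G)) ⊆ closure (profiniteIota G '' C) := by
  convert denseRange_profiniteIota.open_subset_closure_inter (isOpen_kerEval (C := C)) using 2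
  ext x
  constructor
  · rintro ⟨g, hg, rfl⟩
    exact ⟨profiniteIota_mem_kerEval.mpr hg, g, rfl⟩
  · rintro ⟨hx, g, rfl⟩
    exact ⟨g, profiniteIota_mem_kerEval.mp hx, rfl⟩

lemma exists_eval_eq_of_mem_kerEval {κ : ProfiniteCompletion G} (hκ : κ ∈ kerEval C)
    (S : Finset (NormalFiniteIndexSubgroup G)) :
    ∃ c ∈ C, ∀ M ∈ S, eval M (profiniteIota G c) = eval M κ := by
  have hO : IsOpen {y | ∀ M ∈ S, eval M y = eval M κ} := by
    simp only [Set.ofPred_forall]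
    exact isOpen_biInter_finset fun M _ =>
      (isOpen_discrete {eval M κ}).preimage (continuous_eval M)
  obtain ⟨_, hy, c, hc, rfl⟩ := mem_closure_iff.mp (kerEval_subset_closure hκ) _ hO fun M _ => rfl
  exact ⟨c, hc, hy⟩

instance [IsMulCommutative C] : IsMulCommutative (kerEval C) :=
  ⟨⟨fun a b => Subtype.ext <| ext fun M => by
    obtain ⟨c₁, hc₁, h₁⟩ := exists_eval_eq_of_mem_kerEval a.2 {M}
    obtain ⟨c₂, hc₂, h₂⟩ := exists_eval_eq_of_mem_kerEval b.2 {M}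
    simp only [Finset.mem_singleton, forall_eq] at h₁ h₂
    rw [Subgroup.coe_mul, Subgroup.coe_mul, map_mul, map_mul, ← h₁, ← h₂]
    simp only [← map_mul, setLike_mul_comm hc₁ hc₂]⟩⟩

lemma exists_mul_inv_mem_kerEval (x : ProfiniteCompletion G) :
    ∃ a ∈ (profiniteIota G).range, x * a⁻¹ ∈ kerEval C := by
  obtain ⟨g, hg⟩ := QuotientGroup.mk_surjective (eval (.of C) x)
  refine ⟨profiniteIota G g, ⟨g, rfl⟩, ?_⟩
  rw [MonoidHom.mem_ker, map_mul, map_inv, eval_profiniteIota, hg, mul_inv_cancel]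

section FreeAbelianKernel

variable [IsMulCommutative C] [Group.FG C]

lemma exists_pow_eq_of_profiniteIota_eq_pow {τ : ProfiniteCompletion G} (hτ : τ ∈ kerEval C)
    {m : ℕ} (hm : m ≠ 0) {g : G} (h : profiniteIota G g = τ ^ m) : ∃ e ∈ C, e ^ m = g := by
  have := C.powSubgroup_finiteIndex hm
  obtain ⟨c, hc, hcτ⟩ := exists_eval_eq_of_mem_kerEval hτ {.of (C.powSubgroup m)}
  simp only [Finset.mem_singleton, forall_eq] at hcτ
  have : (g : G ⧸ C.powSubgroup m) = 1 := by
    change eval (.of (C.powSubgroup m)) (profiniteIota G g) = 1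
    rw [h, map_pow, ← hcτ, eval_profiniteIota, ← QuotientGroup.mk_pow, QuotientGroup.eq_one_iff]
    exact Subgroup.mem_powSubgroup.mpr ⟨c, hc, rfl⟩
  exact Subgroup.mem_powSubgroup.mp ((QuotientGroup.eq_one_iff g).mp this)

lemma eq_profiniteIota_of_pow_eq [IsMulTorsionFree C] {τ : ProfiniteCompletion G}
    (hτ : τ ∈ kerEval C) {e : G} (he : e ∈ C) {m : ℕ} (hm : m ≠ 0)
    (h : τ ^ m = profiniteIota G (e ^ m)) : τ = profiniteIota G e := by
  classical
  ext M
  -- Modulo `C^(m t)`, `m`-th roots in `C` differ by `t`-th powers, and these vanish in `G/M`.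
  set t := Nat.card (G ⧸ M.val)
  have := C.powSubgroup_finiteIndex (mul_ne_zero hm (Nat.card_pos (α := G ⧸ M.val)).ne')
  set P : NormalFiniteIndexSubgroup G := .of (C.powSubgroup (m * t))
  obtain ⟨g, hg, hgτ⟩ := exists_eval_eq_of_mem_kerEval hτ {M, P}
  have hP : (e ^ m)⁻¹ * g ^ m ∈ C.powSubgroup (m * t) := by
    rw [← QuotientGroup.eq]
    change eval P (profiniteIota G (e ^ m)) = eval P (profiniteIota G (g ^ m))
    rw [← h, map_pow, map_pow, map_pow, hgτ P (by simp)]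
  obtain ⟨f, hf, hfP⟩ := Subgroup.mem_powSubgroup.mp hP
  have hroot : e⁻¹ * g = f ^ t := by
    have : (⟨e⁻¹ * g, mul_mem (inv_mem he) hg⟩ : C) ^ m = ⟨f ^ t, pow_mem hf t⟩ ^ m := by
      ext
      simp only [SubmonoidClass.coe_pow]
      rw [Commute.mul_pow (setLike_mul_comm (inv_mem he) hg), inv_pow, ← hfP, ← pow_mul,
        mul_comm]
    exact congrArg Subtype.val (IsMulTorsionFree.pow_left_injective hm this)
  rw [← hgτ M (by simp), eval_profiniteIota, eval_profiniteIota, eq_comm, QuotientGroup.eq, hroot,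
    ← QuotientGroup.eq_one_iff, QuotientGroup.mk_pow]
  exact pow_card_eq_one'

lemma exists_eq_profiniteIota_mul_pow {κ : ProfiniteCompletion G} (hκ : κ ∈ kerEval C) {m : ℕ}
    (hm : m ≠ 0) : ∃ c ∈ C, ∃ τ ∈ kerEval C, κ = profiniteIota G c * τ ^ m := by
  have := Subgroup.finiteIndex_range_powMonoidHom_of_fg C hm
  let R : Set (ProfiniteCompletion G) :=
    Set.range fun q : C ⧸ (powMonoidHom m : C →* C).range => profiniteIota G (q.out : G)
  let S := (fun p : ProfiniteCompletion G × ProfiniteCompletion G => p.1 * p.2 ^ m) ''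
    (R ×ˢ kerEval C)
  have hS : IsClosed S :=
    (((Set.finite_range _).isCompact.prod isClosed_kerEval.isCompact).image (by fun_prop)).isClosed
  have hCS : profiniteIota G '' C ⊆ S := by
    rintro _ ⟨c, hc, rfl⟩
    set q : C ⧸ (powMonoidHom m : C →* C).range := QuotientGroup.mk ⟨c, hc⟩
    obtain ⟨f, hf⟩ := QuotientGroup.eq.mp q.out_eq'
    refine ⟨(profiniteIota G q.out, profiniteIota G f),
      ⟨⟨q, rfl⟩, profiniteIota_mem_kerEval.mpr f.2⟩, ?_⟩
    change profiniteIota G _ * (profiniteIota G _) ^ m = _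
    rw [← map_pow, ← map_mul, ← SubmonoidClass.coe_pow, ← powMonoidHom_apply, hf]
    simp
  obtain ⟨⟨_, τ⟩, ⟨⟨q, rfl⟩, hτ⟩, rfl⟩ := closure_minimal hCS hS (kerEval_subset_closure hκ)
  exact ⟨q.out, q.out.2, τ, hτ, rfl⟩

lemma bijective_pow_quotient_range [IsMulTorsionFree C] {m : ℕ} (hm : m ≠ 0) :
    Function.Bijective fun v : kerEval C ⧸ (profiniteIota G).range.subgroupOf (kerEval C) =>
      v ^ m := by
  constructor
  · refine (injective_iff_map_eq_one
      (powMonoidHom (α := kerEval C ⧸ (profiniteIota G).range.subgroupOf (kerEval C)) m)).mpr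
      fun v hv => ?_
    induction v using QuotientGroup.induction_on with | H τ
    rw [powMonoidHom_apply, ← QuotientGroup.mk_pow, QuotientGroup.eq_one_iff,
      Subgroup.mem_subgroupOf] at hv
    obtain ⟨g, hg⟩ := hv
    obtain ⟨e, he, rfl⟩ := exists_pow_eq_of_profiniteIota_eq_pow τ.2 hm hg
    rw [QuotientGroup.eq_one_iff, Subgroup.mem_subgroupOf,
      eq_profiniteIota_of_pow_eq τ.2 he hm hg.symm]
    exact ⟨e, rfl⟩
  · intro v
    induction v using QuotientGroup.induction_on with | H κ
    obtain ⟨c, hc, τ, hτ, hκ⟩ := exists_eq_profiniteIota_mul_pow κ.2 hm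
    let ιc : kerEval C := ⟨profiniteIota G c, profiniteIota_mem_kerEval.mpr hc⟩
    have hιc : (ιc : kerEval C ⧸ (profiniteIota G).range.subgroupOf (kerEval C)) = 1 :=
      (QuotientGroup.eq_one_iff ιc).mpr ⟨c, rfl⟩
    refine ⟨(⟨τ, hτ⟩ : kerEval C), ?_⟩
    rw [show κ = ιc * ⟨τ, hτ⟩ ^ m from Subtype.ext hκ, QuotientGroup.mk_mul, hιc, one_mul,
      QuotientGroup.mk_pow]

end FreeAbelianKernel

end Kernel

end ProfiniteCompletion

end

theorem VirtuallyFreeAbelian.exists_normal_free_abelian {G : Type*} [Group G]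
    (h : VirtuallyFreeAbelian G) :
    ∃ C : Subgroup G, C.Normal ∧ C.FiniteIndex ∧ IsMulCommutative C ∧ Group.FG C ∧
      IsMulTorsionFree C := by
  obtain ⟨n, N, hN, ⟨e⟩⟩ := h
  let j : N.normalCore →* Multiplicative (Fin n → ℤ) :=
    e.toMonoidHom.comp (Subgroup.inclusion N.normalCore_le)
  have hj : Function.Injective j := e.injective.comp (Subgroup.inclusion_injective _)
  have : Group.FG N := Group.fg_of_surjective (f := e.symm.toMonoidHom) e.symm.surjective
  refine ⟨N.normalCore, N.normalCore_normal, inferInstance,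
    ⟨⟨fun a b => hj (by simp only [map_mul, mul_comm])⟩⟩,
    Group.fg_of_surjective
      (f := (Subgroup.subgroupOfEquivOfLe N.normalCore_le).toMonoidHom)
      (Subgroup.subgroupOfEquivOfLe N.normalCore_le).surjective,
    hj.isMulTorsionFree j⟩

theorem finite_subgroups_of_completion_conjugate_into_image_general
    (G : Type*) [Group G] (hGvfa : VirtuallyFreeAbelian G)
    (H : Subgroup (ProfiniteCompletion G)) (hH : Finite H) :
    ∃ b : ProfiniteCompletion G,
      H.map (MulAut.conj b).toMonoidHom ≤ (profiniteIota G).range := by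
  obtain ⟨C, _, _, _, _, _⟩ := hGvfa.exists_normal_free_abelian
  obtain ⟨b, -, hb⟩ := Subgroup.exists_conj_map_le_of_bijective_pow
    (ProfiniteCompletion.kerEval C) _ H
    (fun h _ => ProfiniteCompletion.exists_mul_inv_mem_kerEval h)
    (ProfiniteCompletion.bijective_pow_quotient_range Nat.card_pos.ne')
  exact ⟨b, hb⟩

/-- For a finitely generated virtually free abelian group `G`, every finite subgroup `H`
of the profinite completion `Ĝ` is conjugate to a subgroup of `ι(G)`: there is `b ∈ Ĝ`
with `bHb⁻¹ ⊆ ι(G)`. -/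
theorem finite_subgroups_of_completion_conjugate_into_image
    (G : Type*) [Group G] (hGfg : Group.FG G) (hGvfa : VirtuallyFreeAbelian G)
    (H : Subgroup (ProfiniteCompletion G)) (hH : Finite H) :
    ∃ b : ProfiniteCompletion G,
      H.map (MulAut.conj b).toMonoidHom ≤ (profiniteIota G).range :=
  finite_subgroups_of_completion_conjugate_into_image_general G hGvfa H hH
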